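/- Let h : ℂ^N → ℝ be convex, let C ⊆ ℂ^N be a nonempty closed convex set, let x ∈ C, g ∈ ℂ^N, and α > 0. Let B ∈ ℂ^{N×N} be Hermitian positive definite with B ⪯ η̄·I_N for some η̄ > 0. Then D_h^C(x, g, B, α) ≥ (1/η̄)·D_h^C(x, g, I_N, α/η̄). -/

import Mathlib

open scoped ComplexOrder

noncomputable section

/-- `ℂ^N` with the standard complex inner product (conjugate-linear in the
first argument) and the induced norm. -/
abbrev EC (N : ℕ) := EuclideanSpace ℂ (Fin N)

/-- Weighted squared norm `‖z‖_W² = zᴴ W z` (its real part, which is the full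
value when `W` is Hermitian). -/
def wnorm2 {N : ℕ} (W : Matrix (Fin N) (Fin N) ℂ) (z : EC N) : ℝ :=
  (dotProduct (fun i => starRingEnd ℂ (z i)) (W.mulVec (fun i => z i))).re

/-- Surrogate `S_h(x̄, x, g, W, α) = Re⟨g, x̄ − x⟩ + (1/(2α))‖x̄ − x‖_W² + h(x̄) − h(x)`. -/
def Sh {N : ℕ} (h : EC N → ℝ) (W : Matrix (Fin N) (Fin N) ℂ) (α : ℝ)
    (g x xb : EC N) : ℝ :=
  (inner ℂ g (xb - x) : ℂ).re + (1 / (2 * α)) * wnorm2 W (xb - x) + h xb - h x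

/-- `D_h^C(x, g, W, α) = −(2/α)·inf_{x̄ ∈ C} S_h(x̄, x, g, W, α)`. -/
def Dh {N : ℕ} (h : EC N → ℝ) (C : Set (EC N)) (W : Matrix (Fin N) (Fin N) ℂ)
    (α : ℝ) (g x : EC N) : ℝ :=
  -(2 / α) * sInf ((fun xb => Sh h W α g x xb) '' C)

/-- The real-linear continuous functional `d ↦ Re⟨g, d⟩`, used to say that a
real-differentiable `f : ℂ^N → ℝ` has gradient `g` at a point. -/
def gradDual {N : ℕ} (g : EC N) : EC N →L[ℝ] ℝ :=
  Complex.reCLM.comp ((innerSL ℂ g).restrictScalars ℝ)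

/-- The rank-one matrix `u·uᴴ` with entries `uᵢ · conj(uⱼ)`. -/
def rankOne {N : ℕ} (u : EC N) : Matrix (Fin N) (Fin N) ℂ :=
  Matrix.vecMulVec (fun i => u i) (fun i => starRingEnd ℂ (u i))

end

/-!
Since `B ⪯ η̄ I`, the surrogate with weight `B` lies pointwise below the one with weight `η̄ I`,
and `S_h(·, x, g, η̄ I, α) = S_h(·, x, g, I, α / η̄)`; taking infima over `C` and multiplying by
`-2/α` reverses the inequality. The infima must be genuine: `sInf` of a set unbounded below is `0`
in Lean, so one needs the `B`-surrogate to be bounded below. It is, because `B ≻ 0` makes its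
quadratic term coercive while the convex `h` has an affine minorant.
-/

open Set

section WeightedNorm

variable {N : ℕ}

lemma wnorm2_sub_left (W V : Matrix (Fin N) (Fin N) ℂ) (z : EC N) :
    wnorm2 (W - V) z = wnorm2 W z - wnorm2 V z := by
  simp only [wnorm2, Matrix.sub_mulVec, dotProduct_sub, Complex.sub_re]

lemma wnorm2_smul_one (r : ℝ) (z : EC N) : wnorm2 (r • 1) z = r * ‖z‖ ^ 2 := by
  have hself : dotProduct (fun i => starRingEnd ℂ (z i)) (fun i => z i) = inner ℂ z z := by
    simp only [dotProduct, PiLp.inner_apply, RCLike.inner_apply, mul_comm]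
  rw [wnorm2, Matrix.smul_mulVec, Matrix.one_mulVec, dotProduct_smul, hself, Complex.smul_re,
    smul_eq_mul, ← inner_self_eq_norm_sq (𝕜 := ℂ) z]
  rfl

lemma wnorm2_one (z : EC N) : wnorm2 1 z = ‖z‖ ^ 2 := by
  simpa using wnorm2_smul_one 1 z

lemma wnorm2_smul (W : Matrix (Fin N) (Fin N) ℂ) (r : ℝ) (z : EC N) :
    wnorm2 W (r • z) = r ^ 2 * wnorm2 W z := by
  have hz : (fun i => (r • z) i) = (r : ℂ) • fun i => z i := by
    funext i; simp [Complex.real_smul]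
  have hz' : (fun i => starRingEnd ℂ ((r • z) i)) = (r : ℂ) • fun i => starRingEnd ℂ (z i) := by
    funext i; simp [Complex.real_smul]
  rw [wnorm2, wnorm2, hz, hz', Matrix.mulVec_smul, smul_dotProduct, dotProduct_smul, smul_smul,
    ← Complex.ofReal_mul, smul_eq_mul, Complex.re_ofReal_mul, sq]

lemma continuous_wnorm2 (W : Matrix (Fin N) (Fin N) ℂ) : Continuous (wnorm2 (N := N) W) := by
  unfold wnorm2
  simp only [dotProduct, Matrix.mulVec]
  fun_prop

lemma wnorm2_le_of_posSemidef_sub {W V : Matrix (Fin N) (Fin N) ℂ} (hWV : (V - W).PosSemidef)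
    (z : EC N) : wnorm2 W z ≤ wnorm2 V z :=
  sub_nonneg.mp (wnorm2_sub_left V W z ▸ hWV.re_dotProduct_nonneg _)

lemma Matrix.PosDef.wnorm2_pos {W : Matrix (Fin N) (Fin N) ℂ} (hW : W.PosDef) {z : EC N}
    (hz : z ≠ 0) : 0 < wnorm2 W z :=
  hW.re_dotProduct_pos fun h => hz (by ext i; exact congrFun h i)

lemma Matrix.PosDef.exists_pos_mul_sq_norm_le_wnorm2 {W : Matrix (Fin N) (Fin N) ℂ}
    (hW : W.PosDef) : ∃ ε > 0, ∀ z : EC N, ε * ‖z‖ ^ 2 ≤ wnorm2 W z := by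
  have hunit {z : EC N} (hz : z ≠ 0) : ‖z‖⁻¹ • z ∈ Metric.sphere (0 : EC N) 1 := by
    simpa using norm_smul_inv_norm (𝕜 := ℝ) hz
  rcases (Metric.sphere (0 : EC N) 1).eq_empty_or_nonempty with hS | hS
  · refine ⟨1, one_pos, fun z => ?_⟩
    obtain rfl : z = 0 := by
      by_contra hz
      exact hS.subset (hunit hz)
    simp [wnorm2]
  obtain ⟨u, hu, hmin⟩ :=
    (isCompact_sphere (0 : EC N) 1).exists_isMinOn hS (continuous_wnorm2 W).continuousOn
  refine ⟨wnorm2 W u, hW.wnorm2_pos (ne_zero_of_mem_unit_sphere ⟨u, hu⟩), fun z => ?_⟩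
  rcases eq_or_ne z 0 with rfl | hz
  · simp [wnorm2]
  -- homogeneity reduces the bound to the minimum on the unit sphere
  have hmin_z : wnorm2 W u ≤ ‖z‖⁻¹ ^ 2 * wnorm2 W z := wnorm2_smul W _ z ▸ hmin (hunit hz)
  have hnz : 0 < ‖z‖ := norm_pos_iff.mpr hz
  calc wnorm2 W u * ‖z‖ ^ 2 ≤ ‖z‖⁻¹ ^ 2 * wnorm2 W z * ‖z‖ ^ 2 := by gcongr
    _ = wnorm2 W z := by field_simp

end WeightedNorm

lemma ConvexOn.exists_affine_le {E : Type*} [NormedAddCommGroup E] [NormedSpace ℝ E]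
    [FiniteDimensional ℝ E] {h : E → ℝ} (hconv : ConvexOn ℝ univ h) :
    ∃ (φ : E →L[ℝ] ℝ) (c : ℝ), ∀ y, φ y + c ≤ h y := by
  have hcont : Continuous h := continuousOn_univ.mp (hconv.continuousOn isOpen_univ)
  have hepi_closed : IsClosed {p : E × ℝ | h p.1 ≤ p.2} :=
    isClosed_le (hcont.comp continuous_fst) continuous_snd
  have hepi_convex : Convex ℝ {p : E × ℝ | h p.1 ≤ p.2} := by
    simpa using hconv.convex_epigraph
  obtain ⟨f, u, hf_pt, hf_epi⟩ := geometric_hahn_banach_point_closed hepi_convex hepi_closed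
    (show ((0 : E), h 0 - 1) ∉ {p : E × ℝ | h p.1 ≤ p.2} by simp)
  have hsplit (y : E) (t : ℝ) : f (y, t) = f (y, 0) + t * f (0, 1) := by
    rw [← smul_eq_mul, ← map_smul, ← map_add, Prod.smul_mk, smul_zero, smul_eq_mul, mul_one,
      Prod.mk_add_mk, add_zero, zero_add]
  have hm : 0 < f (0, 1) := by
    have h0 := hf_epi (0, h 0) (le_refl (h 0))
    rw [hsplit] at hf_pt h0
    linarith
  refine ⟨-(f (0, 1))⁻¹ • f.comp (ContinuousLinearMap.inl ℝ E ℝ), u / f (0, 1), fun y => ?_⟩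
  have hy := hf_epi (y, h y) (le_refl (h y))
  rw [hsplit] at hy
  simp only [smul_apply, ContinuousLinearMap.comp_apply,
    ContinuousLinearMap.inl_apply, smul_eq_mul]
  rw [neg_mul, ← div_eq_inv_mul, neg_add_eq_sub, ← sub_div, div_le_iff₀ hm]
  linarith

section Surrogate

variable {N : ℕ} (h : EC N → ℝ) (W : Matrix (Fin N) (Fin N) ℂ) (α : ℝ) (g x : EC N)

lemma Sh_eq (xb : EC N) :
    Sh h W α g x xb = gradDual g (xb - x) + (1 / (2 * α)) * wnorm2 W (xb - x) + h xb - h x :=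
  rfl

lemma Sh_smul_one (η : ℝ) (xb : EC N) : Sh h (η • 1) α g x xb = Sh h 1 (α / η) g x xb := by
  rw [Sh, Sh, wnorm2_smul_one, wnorm2_one, ← mul_div_assoc, one_div_div]
  ring

variable {h W α}

lemma Sh_le_of_posSemidef_sub {V : Matrix (Fin N) (Fin N) ℂ} (hα : 0 ≤ α)
    (hWV : (V - W).PosSemidef) (xb : EC N) : Sh h W α g x xb ≤ Sh h V α g x xb := by
  simp only [Sh]
  gcongr
  exact wnorm2_le_of_posSemidef_sub hWV _

lemma bddBelow_range_Sh (hconv : ConvexOn ℝ univ h) (hW : W.PosDef) (hα : 0 < α) :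
    BddBelow (range (Sh h W α g x)) := by
  obtain ⟨ε, hε, hcoer⟩ := hW.exists_pos_mul_sq_norm_le_wnorm2
  obtain ⟨φ, c, hφ⟩ := hconv.exists_affine_le
  set ψ := gradDual g + φ
  set a := ε / (2 * α)
  have ha : 0 < a := by positivity
  refine ⟨-(‖ψ‖ ^ 2 / (4 * a)) + φ x + c - h x, ?_⟩
  rintro _ ⟨xb, rfl⟩
  set t := ‖xb - x‖
  have hlin : -(‖ψ‖ * t) ≤ ψ (xb - x) := by
    simpa using neg_le_of_abs_le (ψ.le_opNorm (xb - x))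
  have hquad : a * t ^ 2 ≤ 1 / (2 * α) * wnorm2 W (xb - x) := by
    calc a * t ^ 2 = 1 / (2 * α) * (ε * t ^ 2) := by ring
      _ ≤ _ := by gcongr; exact hcoer _
  have hsq : -(‖ψ‖ ^ 2 / (4 * a)) ≤ a * t ^ 2 - ‖ψ‖ * t := by
    have hsquare : a * t ^ 2 - ‖ψ‖ * t + ‖ψ‖ ^ 2 / (4 * a) = (2 * a * t - ‖ψ‖) ^ 2 / (4 * a) := by
      field_simp
      ring
    rw [neg_le_iff_add_nonneg, hsquare]
    positivity
  have hh : φ (xb - x) + φ x + c ≤ h xb := by simpa using hφ xb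
  have hψ : ψ (xb - x) = gradDual g (xb - x) + φ (xb - x) := rfl
  rw [Sh_eq]
  linarith

end Surrogate

lemma csInf_image_le_csInf_image {ι β : Type*} [ConditionallyCompleteLattice β] {f g : ι → β}
    {s : Set ι} (hf : BddBelow (f '' s)) (hs : s.Nonempty) (hfg : ∀ i ∈ s, f i ≤ g i) :
    sInf (f '' s) ≤ sInf (g '' s) :=
  le_csInf (hs.image g) <| by
    rintro _ ⟨i, hi, rfl⟩
    exact (csInf_le hf ⟨i, hi, rfl⟩).trans (hfg i hi)

section Gap

variable {N : ℕ} (h : EC N → ℝ) (C : Set (EC N)) (α : ℝ) (g x : EC N)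

lemma Dh_smul_one {η : ℝ} (hη : η ≠ 0) :
    Dh h C (η • 1) α g x = 1 / η * Dh h C 1 (α / η) g x := by
  simp only [Dh, Sh_smul_one]
  field_simp

variable {h C α}

lemma Dh_le_of_posSemidef_sub {W V : Matrix (Fin N) (Fin N) ℂ} (hα : 0 < α)
    (hbdd : BddBelow (range (Sh h W α g x))) (hx : x ∈ C) (hWV : (V - W).PosSemidef) :
    Dh h C V α g x ≤ Dh h C W α g x :=
  mul_le_mul_of_nonpos_left
    (csInf_image_le_csInf_image (hbdd.mono (image_subset_range _ _)) ⟨x, hx⟩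
      fun xb _ => Sh_le_of_posSemidef_sub g x hα.le hWV xb)
    (neg_nonpos.mpr (by positivity))

end Gap

theorem stmt13_general {N : ℕ} (h : EC N → ℝ) (hconv : ConvexOn ℝ Set.univ h)
    (C : Set (EC N))
    (x : EC N) (hx : x ∈ C) (g : EC N) (α : ℝ) (hα : 0 < α)
    (B : Matrix (Fin N) (Fin N) ℂ) (hB : B.PosDef)
    (ηb : ℝ) (hηb : 0 < ηb)
    (hBub : (ηb • (1 : Matrix (Fin N) (Fin N) ℂ) - B).PosSemidef) :
    Dh h C B α g x ≥ (1 / ηb) * Dh h C 1 (α / ηb) g x := by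
  rw [← Dh_smul_one h C α g x hηb.ne']
  exact Dh_le_of_posSemidef_sub g x hα (bddBelow_range_Sh g x hconv hB hα) hx hBub

/-- Comparison of `D_h^C` with the identity weighting.
For `h` convex, `C` nonempty closed convex, `x ∈ C`, `g ∈ ℂ^N`, `α > 0`, and
`B` Hermitian positive definite with `B ⪯ η̄·I` for some `η̄ > 0`, one has
`D_h^C(x, g, B, α) ≥ (1/η̄)·D_h^C(x, g, I, α/η̄)`. -/
theorem stmt13 {N : ℕ} (h : EC N → ℝ) (hconv : ConvexOn ℝ Set.univ h)
    (C : Set (EC N)) (hCne : C.Nonempty) (hCcl : IsClosed C) (hCcv : Convex ℝ C)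
    (x : EC N) (hx : x ∈ C) (g : EC N) (α : ℝ) (hα : 0 < α)
    (B : Matrix (Fin N) (Fin N) ℂ) (hB : B.PosDef)
    (ηb : ℝ) (hηb : 0 < ηb)
    (hBub : (ηb • (1 : Matrix (Fin N) (Fin N) ℂ) - B).PosSemidef) :
    Dh h C B α g x ≥ (1 / ηb) * Dh h C 1 (α / ηb) g x :=
  stmt13_general h hconv C x hx g α hα B hB ηb hηb hBub
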